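/- arXiv:1109.5309 — 9 statements merged into one kernel-verified Lean document; each statement's English description precedes it below -/
import Mathlib

section
/- Let B ⊆ ℝ be a Borel set of Lebesgue measure zero and μ a translation invariant Borel measure on ℝ for which B has positive σ-finite measure. Then μ(B ∩ (B + t)) = 0 for Lebesgue-almost every t ∈ ℝ. -/
/-!
Integrate `t ↦ μ(B ∩ (B + t))` against Lebesgue measure and apply Tonelli to the set
`{(t, x) | x ∈ B, x - t ∈ B}`: for fixed `x` its section `{t | x - t ∈ B} = x - B` is Lebesgue
null, so the integral vanishes and the integrand is zero almost everywhere. Tonelli applies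
because `μ` restricted to `B` is σ-finite.
-/

open MeasureTheory Set Filter Metric
open scoped ENNReal Pointwise Topology

/-- `B` is σ-finite for `μ`: `B` is a countable union of measurable sets of finite measure. -/
def SigmaFiniteOn (μ : Measure ℝ) (B : Set ℝ) : Prop :=
  ∃ s : ℕ → Set ℝ, (∀ n, MeasurableSet (s n)) ∧ (∀ n, μ (s n) < ⊤) ∧ B = ⋃ n, s n

/-- `μ` is a translation invariant Borel measure on `ℝ`. -/
def TransInv (μ : Measure ℝ) : Prop :=
  ∀ (A : Set ℝ), MeasurableSet A → ∀ t : ℝ, μ ((· + t) '' A) = μ A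

theorem SigmaFiniteOn.sigmaFinite_restrict {μ : Measure ℝ} {B : Set ℝ} (hB : MeasurableSet B)
    (h : SigmaFiniteOn μ B) : SigmaFinite (μ.restrict B) := by
  obtain ⟨s, -, hs_fin, hBs⟩ := h
  refine Measure.sigmaFinite_of_countable ((countable_range s).insert Bᶜ) ?_ ?_
  · rintro _ (rfl | ⟨n, rfl⟩)
    · simp [Measure.restrict_apply' hB]
    · exact (Measure.restrict_le_self _).trans_lt (hs_fin n)
  · rw [sUnion_insert, sUnion_range, ← hBs, compl_union_self]

theorem ae_measure_image_add_right_eq_zero {G : Type*} [MeasurableSpace G] [AddGroup G]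
    [MeasurableAdd₂ G] [MeasurableNeg G] (μ ν : Measure G) [SFinite μ] [SFinite ν]
    [μ.IsAddLeftInvariant] [μ.IsNegInvariant] {B : Set G} (hB : MeasurableSet B)
    (hB0 : μ B = 0) : ∀ᵐ t ∂μ, ν ((· + t) '' B) = 0 := by
  set S : Set (G × G) := {p | p.2 - p.1 ∈ B}
  have hS : MeasurableSet S := (measurable_snd.sub measurable_fst) hB
  have hS0 : μ.prod ν S = 0 := by
    have hμ_section (x : G) : μ ((·, x) ⁻¹' S) = 0 :=
      ((Measure.measurePreserving_sub_left μ x).measure_preimage hB.nullMeasurableSet).trans hB0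
    simp [Measure.prod_apply_symm hS, hμ_section]
  filter_upwards [(Measure.measure_prod_null hS).mp hS0] with t ht
  have hν_section : Prod.mk t ⁻¹' S = (· + t) '' B := by
    ext x
    simp [S, sub_eq_add_neg]
  rw [← hν_section]
  exact ht

theorem stmt1_general (B : Set ℝ) (hB : MeasurableSet B) (hB0 : volume B = 0)
    (μ : Measure ℝ) (hsf : SigmaFiniteOn μ B) :
    ∀ᵐ t ∂(volume : Measure ℝ), μ (B ∩ ((· + t) '' B)) = 0 := by
  have := hsf.sigmaFinite_restrict hB
  filter_upwards [ae_measure_image_add_right_eq_zero volume (μ.restrict B) hB hB0] with t ht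
  rwa [Measure.restrict_apply' hB, inter_comm] at ht

theorem stmt1 (B : Set ℝ) (hB : MeasurableSet B) (hB0 : volume B = 0)
    (μ : Measure ℝ) (hμ : TransInv μ) (hpos : 0 < μ B) (hsf : SigmaFiniteOn μ B) :
    ∀ᵐ t ∂(volume : Measure ℝ), μ (B ∩ ((· + t) '' B)) = 0 :=
  stmt1_general B hB hB0 μ hsf
end

section
/- Let B ⊆ ℝ be a Borel set of Lebesgue measure zero and μ a translation invariant Borel measure on ℝ for which B has positive σ-finite measure. Then there exists a Borel set B' ⊆ B with μ(B') > 0 such that the difference set B' − B' has empty interior. -/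
open MeasureTheory Set Filter Metric
open scoped ENNReal Pointwise Topology

/-!
Pick a piece `A ⊆ B` of positive finite `μ`-measure. Since `A` is Lebesgue null, Tonelli gives
`∫ μ(A ∩ (A + t)) dt = ∫_A λ(x - A) dμ(x) = 0`, so `μ(A ∩ (A + t)) = 0` for all `t` in a dense
set, hence for all `t` in a countable dense set `C`. Removing the `μ`-null set
`⋃_{t ∈ C} A ∩ (A + t)` from `A` leaves a set whose difference set misses `C`, so it has
empty interior.
-/

theorem SigmaFiniteOn.exists_subset_pos_lt_top {μ : Measure ℝ} {B : Set ℝ}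
    (hsf : SigmaFiniteOn μ B) (hpos : 0 < μ B) :
    ∃ A ⊆ B, MeasurableSet A ∧ 0 < μ A ∧ μ A < ∞ := by
  obtain ⟨s, hsm, hsfin, rfl⟩ := hsf
  obtain ⟨n, hn⟩ : ∃ n, 0 < μ (s n) := by
    by_contra! h
    exact hpos.ne' (measure_iUnion_null fun n => nonpos_iff_eq_zero.1 (h n))
  exact ⟨s n, subset_iUnion s n, hsm n, hn, hsfin n⟩

section Group

variable {G : Type*} [MeasurableSpace G] [AddGroup G] [MeasurableAdd₂ G] [MeasurableNeg G]

theorem measurableSet_inter_preimage_sub_const {A : Set G} (hA : MeasurableSet A) (t : G) :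
    MeasurableSet (A ∩ (· - t) ⁻¹' A) :=
  hA.inter (measurable_sub_const t hA)

theorem ae_measure_inter_preimage_sub_const_eq_zero (μ ν : Measure G) [SFinite μ]
    [SFinite ν] [μ.IsAddLeftInvariant] {A : Set G} (hA : MeasurableSet A) (hA0 : μ A = 0) :
    ∀ᵐ t ∂μ, ν (A ∩ (· - t) ⁻¹' A) = 0 := by
  set S : Set (G × G) := {p | p.2 ∈ A ∧ p.2 - p.1 ∈ A}
  have hS : MeasurableSet S :=
    (measurable_snd hA).inter ((measurable_snd.sub measurable_fst) hA)
  have hSnull : μ.prod ν S = 0 := by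
    rw [Measure.prod_apply_symm hS]
    refine lintegral_eq_zero_of_ae_eq_zero (ae_of_all _ fun x => ?_)
    exact measure_mono_null (fun t ht => ht.2)
      ((quasiMeasurePreserving_sub_left μ x).preimage_null hA0)
  exact (Measure.measure_prod_null hS).1 hSnull

end Group

theorem sub_subset_compl_of_diff_biUnion {G : Type*} [AddCommGroup G] (A C : Set G) :
    (A \ ⋃ t ∈ C, A ∩ (· - t) ⁻¹' A) - (A \ ⋃ t ∈ C, A ∩ (· - t) ⁻¹' A) ⊆ Cᶜ := by
  rintro _ ⟨a, ha, b, hb, rfl⟩ hab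
  exact ha.2 (mem_biUnion hab ⟨ha.1, by simpa using hb.1⟩)

theorem stmt2_general (B : Set ℝ) (hB0 : volume B = 0)
    (μ : Measure ℝ) (hpos : 0 < μ B) (hsf : SigmaFiniteOn μ B) :
    ∃ B' : Set ℝ, B' ⊆ B ∧ MeasurableSet B' ∧ 0 < μ B' ∧ interior (B' - B') = ∅ := by
  obtain ⟨A, hAB, hA, hApos, hAfin⟩ := hsf.exists_subset_pos_lt_top hpos
  have : IsFiniteMeasure (μ.restrict A) := isFiniteMeasure_restrict.2 hAfin.ne
  have hae := ae_measure_inter_preimage_sub_const_eq_zero volume (μ.restrict A) hA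
    (measure_mono_null hAB hB0)
  obtain ⟨C, hCsub, hC, hCdense⟩ := (Measure.dense_of_ae hae).exists_countable_dense_subset
  have hnull : μ (⋃ t ∈ C, A ∩ (· - t) ⁻¹' A) = 0 := by
    refine (measure_biUnion_null_iff hC).2 fun t ht => ?_
    have h := hCsub ht
    rwa [mem_ofPred_eq, Measure.restrict_apply (measurableSet_inter_preimage_sub_const hA t),
      inter_assoc, inter_comm _ A, ← inter_assoc, inter_self] at h
  refine ⟨_, sdiff_subset.trans hAB,
    hA.diff (.biUnion hC fun t _ => measurableSet_inter_preimage_sub_const hA t), ?_,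
    subset_empty_iff.1 ?_⟩
  · rwa [measure_sdiff_null hnull]
  · exact hCdense.interior_compl ▸ interior_mono (sub_subset_compl_of_diff_biUnion A C)

theorem stmt2 (B : Set ℝ) (hB : MeasurableSet B) (hB0 : volume B = 0)
    (μ : Measure ℝ) (hμ : TransInv μ) (hpos : 0 < μ B) (hsf : SigmaFiniteOn μ B) :
    ∃ B' : Set ℝ, B' ⊆ B ∧ MeasurableSet B' ∧ 0 < μ B' ∧ interior (B' - B') = ∅ :=
  stmt2_general B hB0 μ hpos hsf
end

section
/- Let B ⊆ ℝ be a Borel set of Lebesgue measure zero and μ a translation invariant Borel measure on ℝ for which B has positive σ-finite measure. Then there exists a compact set C ⊆ B with μ(C) > 0 such that C − C has empty interior. -/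
open MeasureTheory Set Filter Metric
open scoped ENNReal Pointwise Topology

/-!
Restrict `μ` to a piece `A ⊆ B` of positive finite measure. By Fubini for `volume × μ|A`, since
`A` is Lebesgue-null, almost every `t` satisfies `μ (A ∩ (t + A)) = 0`; these `t` are dense, so
pick a countable dense set `D` of them. Removing the `μ`-null set `⋃ t ∈ D, A ∩ (t + A)` from `A`
leaves a set `A'` of full measure with `(A' - A') ∩ D = ∅`, so `A' - A'` has empty interior.
Inner regularity gives a compact `C ⊆ A'` of positive measure.
-/

theorem SigmaFiniteOn.exists_subset_measure_pos_lt_top {μ : Measure ℝ} {B : Set ℝ}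
    (hB : SigmaFiniteOn μ B) (hpos : 0 < μ B) :
    ∃ A ⊆ B, MeasurableSet A ∧ 0 < μ A ∧ μ A < ⊤ := by
  obtain ⟨s, hs, hsfin, rfl⟩ := hB
  obtain ⟨n, hn⟩ : ∃ n, 0 < μ (s n) := by
    by_contra! h
    exact hpos.ne' (measure_iUnion_null fun n => nonpos_iff_eq_zero.1 (h n))
  exact ⟨s n, subset_iUnion s n, hs n, hn, hsfin n⟩

section Translates

variable {G : Type*} [MeasurableSpace G] [AddGroup G]

theorem ae_measure_inter_vadd_eq_zero [MeasurableAdd₂ G] [MeasurableNeg G] (μ ν : Measure G)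
    [SFinite μ] [SFinite ν] [μ.IsAddLeftInvariant] [μ.IsNegInvariant] {A : Set G}
    (hA : MeasurableSet A) (hA0 : μ A = 0) : ∀ᵐ t ∂μ, ν (A ∩ (t +ᵥ A)) = 0 := by
  set T : Set (G × G) := {p | p.2 ∈ A ∧ -p.1 + p.2 ∈ A}
  have hT : MeasurableSet T :=
    (measurable_snd hA).inter ((measurable_fst.neg.add measurable_snd) hA)
  have hrow : ∀ t, Prod.mk t ⁻¹' T = A ∩ (t +ᵥ A) := fun t => by
    ext c; simp [T, mem_vadd_set_iff_neg_vadd_mem]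
  -- each column `{t | -t + c ∈ A}` is a reflected translate of the null set `A`
  have hcol : ∀ c, μ ((·, c) ⁻¹' T) = 0 := fun c => by
    refine measure_mono_null (t := (-c + ·) ⁻¹' (-A)) (fun t ht => ?_) ?_
    · simpa [neg_add_rev] using ht.2
    · rw [measure_preimage_add, Measure.measure_neg, hA0]
  have hT0 : μ.prod ν T = 0 := by simp [Measure.prod_apply_symm hT, hcol]
  rw [Measure.prod_apply hT, lintegral_eq_zero_iff (measurable_measure_prodMk_left hT)] at hT0
  filter_upwards [hT0] with t ht
  simpa [hrow] using ht

theorem exists_subset_measure_eq_disjoint_sub [MeasurableAdd G] (ν : Measure G) {A : Set G}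
    (hA : MeasurableSet A) {D : Set G} (hD : D.Countable)
    (hDA : ∀ t ∈ D, ν (A ∩ (t +ᵥ A)) = 0) :
    ∃ A' ⊆ A, MeasurableSet A' ∧ ν A' = ν A ∧ Disjoint (A' - A') D := by
  set N := ⋃ t ∈ D, A ∩ (t +ᵥ A)
  refine ⟨A \ N, sdiff_subset, hA.diff (.biUnion hD fun t _ => hA.inter (hA.const_vadd t)),
    measure_sdiff_null ((measure_biUnion_null_iff hD).2 hDA), ?_⟩
  rw [Set.disjoint_left]
  rintro _ ⟨c, hc, c', hc', rfl⟩ hD'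
  exact hc.2 (mem_biUnion hD' ⟨hc.1, c', hc'.1, by simp⟩)

end Translates

theorem exists_subset_measure_eq_interior_sub_eq_empty {G : Type*} [MeasurableSpace G]
    [AddGroup G] [TopologicalSpace G] [SecondCountableTopology G] [MeasurableAdd₂ G]
    [MeasurableNeg G] (μ ν : Measure G) [SFinite μ] [SFinite ν] [μ.IsAddLeftInvariant]
    [μ.IsNegInvariant] [μ.IsOpenPosMeasure] {A : Set G} (hA : MeasurableSet A) (hA0 : μ A = 0) :
    ∃ A' ⊆ A, MeasurableSet A' ∧ ν A' = ν A ∧ interior (A' - A') = ∅ := by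
  obtain ⟨D, hDA, hD, hDdense⟩ :=
    (μ.dense_of_ae (ae_measure_inter_vadd_eq_zero μ ν hA hA0)).exists_countable_dense_subset
  obtain ⟨A', hA'A, hA', hνA', hdisj⟩ := exists_subset_measure_eq_disjoint_sub ν hA hD hDA
  exact ⟨A', hA'A, hA', hνA',
    interior_eq_empty_iff_dense_compl.2 (hDdense.mono hdisj.subset_compl_left)⟩

theorem stmt3_general (B : Set ℝ) (hB0 : volume B = 0)
    (μ : Measure ℝ) (hpos : 0 < μ B) (hsf : SigmaFiniteOn μ B) :
    ∃ C : Set ℝ, C ⊆ B ∧ IsCompact C ∧ 0 < μ C ∧ interior (C - C) = ∅ := by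
  obtain ⟨A, hAB, hA, hApos, hAfin⟩ := hsf.exists_subset_measure_pos_lt_top hpos
  have : Fact (μ A < ⊤) := ⟨hAfin⟩
  obtain ⟨A', hA'A, hA', hμA', hA'int⟩ := exists_subset_measure_eq_interior_sub_eq_empty
    volume (μ.restrict A) hA (measure_mono_null hAB hB0)
  rw [Measure.restrict_apply_self, Measure.restrict_apply hA', inter_eq_left.2 hA'A] at hμA'
  obtain ⟨C, hCA', hC, hCpos⟩ :=
    hA'.exists_lt_isCompact_of_ne_top (hμA' ▸ hAfin.ne) (hμA' ▸ hApos)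
  refine ⟨C, hCA'.trans (hA'A.trans hAB), hC, hCpos, subset_empty_iff.1 ?_⟩
  exact hA'int ▸ interior_mono (sub_subset_sub hCA' hCA')

theorem stmt3 (B : Set ℝ) (hB : MeasurableSet B) (hB0 : volume B = 0)
    (μ : Measure ℝ) (hμ : TransInv μ) (hpos : 0 < μ B) (hsf : SigmaFiniteOn μ B) :
    ∃ C : Set ℝ, C ⊆ B ∧ IsCompact C ∧ 0 < μ C ∧ interior (C - C) = ∅ :=
  stmt3_general B hB0 μ hpos hsf
end

section
/- Let B ⊆ ℝ be a dense G_δ set such that {t ∈ ℝ : B + t ⊆ B} is dense in ℝ, and let C ⊆ B be a compact set with int(C − C) = ∅. Then there exist continuum many reals t such that the translates C + t are pairwise disjoint and all contained in B. -/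
open MeasureTheory Set Filter Metric
open scoped ENNReal Pointwise Topology

/-!
Writing `B = ⋂ n, U n`, the admissible translations
`{t | C + t ⊆ B} = ⋂ n, {t | C + t ⊆ U n}` form a countable intersection of open sets (`C` is
compact) that are dense (they contain the dense set of periods of `B`). The translates `C + t`
and `C + s` are disjoint iff `s - t ∉ C - C`, an open relation whose sections are dense because
the compact set `C - C` has empty interior. A Cantor scheme of balls, each split into two small
balls inside the next open set whose pairs of points satisfy the relation, then produces a
Cantor set of admissible translations that pairwise satisfy it (an instance of Mycielski's
theorem).
-/

open CantorScheme PiNat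

/-- New bits are prepended, as in `PiNat.res`: the children of `l` split `splitScheme V l` at
level `l.length`. -/
def splitScheme {α : Type*} (V : ℕ → Set α → Bool → Set α) : List Bool → Set α
  | [] => univ
  | b :: l => V l.length (splitScheme V l) b

section CantorMap

variable {X : Type*} [MetricSpace X] {R : X → X → Prop}

theorem exists_open_pair_subset_rel (hRo : IsOpen {p : X × X | R p.1 p.2})
    (hRd : ∀ x, Dense {y | R x y}) {U : Set X} (hU : IsOpen U) (hne : U.Nonempty)
    {ε : ℝ} (hε : 0 < ε) :
    ∃ V : Bool → Set X,
      (∀ b, IsOpen (V b) ∧ (V b).Nonempty ∧ closure (V b) ⊆ U ∧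
        ediam (V b) ≤ ENNReal.ofReal ε) ∧
      ∀ u ∈ V false, ∀ v ∈ V true, R u v := by
  obtain ⟨x₀, hx₀⟩ := hne
  obtain ⟨x₁, hx₁U, hx₁R⟩ := (hRd x₀).inter_open_nonempty U hU ⟨x₀, hx₀⟩
  obtain ⟨δ, hδ, hball⟩ := Metric.isOpen_iff.1 (hRo.inter (hU.prod hU)) (x₀, x₁)
    ⟨hx₁R, hx₀, hx₁U⟩
  rw [← ball_prod_same] at hball
  set c : Bool → X := fun b => bif b then x₁ else x₀
  have hcU : ∀ b, ball (c b) δ ⊆ U := by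
    rintro (_ | _) y hy
    exacts [(hball (mk_mem_prod hy (mem_ball_self hδ))).2.1,
      (hball (mk_mem_prod (mem_ball_self hδ) hy)).2.2]
  set r := min (δ / 2) (ε / 2)
  have hr : 0 < r := by positivity
  have hrδ : ∀ x : X, closedBall x r ⊆ ball x δ :=
    fun x => closedBall_subset_ball ((min_le_left _ _).trans_lt (half_lt_self hδ))
  refine ⟨fun b => ball (c b) r, fun b => ⟨isOpen_ball, nonempty_ball.2 hr, ?_, ?_⟩, ?_⟩
  · exact closure_ball_subset_closedBall.trans ((hrδ _).trans (hcU b))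
  · refine ediam_le_of_forall_dist_le fun y hy z hz => ?_
    have : r ≤ ε / 2 := min_le_right _ _
    linarith [dist_triangle_right y z (c b), mem_ball.1 hy, mem_ball.1 hz]
  · exact fun u hu v hv =>
      (hball (mk_mem_prod (hrδ _ (ball_subset_closedBall hu))
        (hrδ _ (ball_subset_closedBall hv)))).1

theorem exists_nat_bool_map_mem_pairwise_rel [CompleteSpace X] [Nonempty X]
    (hRo : IsOpen {p : X × X | R p.1 p.2}) (hRs : ∀ x y, R x y → R y x)
    (hRd : ∀ x, Dense {y | R x y}) {W : ℕ → Set X}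
    (hWo : ∀ n, IsOpen (W n)) (hWd : ∀ n, Dense (W n)) :
    ∃ f : (ℕ → Bool) → X, (∀ a n, f a ∈ W n) ∧ Pairwise fun a b => R (f a) (f b) := by
  have hstep : ∀ (n : ℕ) (U : Set X), IsOpen U → U.Nonempty → ∃ V : Bool → Set X,
      (∀ b, IsOpen (V b) ∧ (V b).Nonempty ∧ closure (V b) ⊆ U ∩ W n ∧
        ediam (V b) ≤ ENNReal.ofReal (1 / (n + 1))) ∧
      ∀ u ∈ V false, ∀ v ∈ V true, R u v := fun n U hU hne =>
    exists_open_pair_subset_rel hRo hRd (hU.inter (hWo n))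
      ((hWd n).inter_open_nonempty U hU hne) Nat.one_div_pos_of_nat
  choose! V hV hVR using hstep
  set A := splitScheme V
  have hA : ∀ l, IsOpen (A l) ∧ (A l).Nonempty := by
    intro l
    induction l with
    | nil => exact ⟨isOpen_univ, univ_nonempty⟩
    | cons b l ih => exact ⟨(hV _ _ ih.1 ih.2 b).1, (hV _ _ ih.1 ih.2 b).2.1⟩
  have hchild : ∀ l b, closure (A (b :: l)) ⊆ A l ∩ W l.length ∧
      ediam (A (b :: l)) ≤ ENNReal.ofReal (1 / (l.length + 1)) :=
    fun l b => (hV _ _ (hA l).1 (hA l).2 b).2.2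
  have hsplit : ∀ l b b', b ≠ b' → ∀ u ∈ A (b :: l), ∀ v ∈ A (b' :: l), R u v := by
    rintro l (_ | _) (_ | _) hbb' u hu v hv
    · exact absurd rfl hbb'
    · exact hVR _ _ (hA l).1 (hA l).2 u hu v hv
    · exact hRs _ _ (hVR _ _ (hA l).1 (hA l).2 v hv u hu)
    · exact absurd rfl hbb'
  have hanti : ClosureAntitone A := fun l b => (hchild l b).1.trans inter_subset_left
  have hdiam : VanishingDiam A := by
    intro x
    rw [← tendsto_add_atTop_iff_nat 1]
    refine tendsto_of_tendsto_of_tendsto_of_le_of_le tendsto_const_nhds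
      (ENNReal.ofReal_zero ▸ ENNReal.tendsto_ofReal tendsto_one_div_add_atTop_nhds_zero_nat)
      (fun _ => bot_le) fun n => ?_
    simpa only [res_succ, res_length] using (hchild (res x n) (x n)).2
  have hdom := hanti.map_of_vanishingDiam hdiam fun l => (hA l).2
  let f : (ℕ → Bool) → X := fun a => (inducedMap A).2 ⟨a, hdom ▸ mem_univ a⟩
  have hf : ∀ a n, f a ∈ A (a n :: res a n) := fun a n => res_succ a n ▸ map_mem _ (n + 1)
  refine ⟨f, fun a n => ?_, fun a b hab => ?_⟩
  · simpa only [res_length] using ((hchild _ _).1 (subset_closure (hf a n))).2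
  · have hres : res a (firstDiff a b) = res b (firstDiff a b) :=
      res_eq_res.2 fun _ hm => apply_eq_of_lt_firstDiff hm
    exact hsplit _ _ _ (apply_firstDiff_ne hab) _ (hf a _) _ (hres ▸ hf b _)

end CantorMap

section Translates

variable {G : Type*} [AddCommGroup G] {C : Set G}

theorem disjoint_image_add_right_iff {t s : G} :
    Disjoint ((· + t) '' C) ((· + s) '' C) ↔ s - t ∉ C - C := by
  rw [← not_iff_not, not_not, not_disjoint_iff, Set.mem_sub]
  constructor
  · rintro ⟨_, ⟨a, ha, rfl⟩, b, hb, hab⟩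
    exact ⟨a, ha, b, hb, sub_eq_sub_iff_add_eq_add.2 (hab.symm.trans (add_comm b s))⟩
  · rintro ⟨a, ha, b, hb, hab⟩
    exact ⟨a + t, ⟨a, ha, rfl⟩, b, hb,
      (add_comm b s).trans (sub_eq_sub_iff_add_eq_add.1 hab).symm⟩

variable [TopologicalSpace G] [IsTopologicalAddGroup G]

theorem IsCompact.isOpen_setOf_image_add_right_subset (hC : IsCompact C) {U : Set G}
    (hU : IsOpen U) : IsOpen {t | (· + t) '' C ⊆ U} := by
  simp only [isOpen_iff_eventually, mem_ofPred_eq, image_subset_iff]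
  exact fun t ht => hC.eventually_forall_of_forall_eventually fun c hc =>
    (continuous_snd.add continuous_fst).continuousAt.preimage_mem_nhds (hU.mem_nhds (ht hc))

theorem IsCompact.isOpen_setOf_disjoint_image_add_right [T2Space G] (hC : IsCompact C) :
    IsOpen {p : G × G | Disjoint ((· + p.1) '' C) ((· + p.2) '' C)} := by
  have hCC : IsCompact (C - C) := by
    rw [← image2_sub, ← image_prod]
    exact (hC.prod hC).image continuous_sub
  simp only [disjoint_image_add_right_iff]
  exact hCC.isClosed.isOpen_compl.preimage (continuous_snd.sub continuous_fst)

theorem dense_setOf_disjoint_image_add_right (hCC : interior (C - C) = ∅) (t : G) :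
    Dense {s | Disjoint ((· + t) '' C) ((· + s) '' C)} := by
  simp only [disjoint_image_add_right_iff]
  exact (interior_eq_empty_iff_dense_compl.1 hCC).preimage (isOpenMap_sub_right t)

end Translates

theorem stmt4_general (B : Set ℝ) (hBGδ : IsGδ B)
    (hper : Dense {t : ℝ | (· + t) '' B ⊆ B})
    (C : Set ℝ) (hCB : C ⊆ B) (hC : IsCompact C) (hCC : interior (C - C) = ∅) :
    ∃ T : Set ℝ, Cardinal.mk T = Cardinal.continuum ∧
      (∀ t ∈ T, (· + t) '' C ⊆ B) ∧
      T.Pairwise (fun t s => Disjoint ((· + t) '' C) ((· + s) '' C)) := by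
  obtain ⟨U, hUo, rfl⟩ := hBGδ.eq_iInter_nat
  let R : ℝ → ℝ → Prop := fun t s => t ≠ s ∧ Disjoint ((· + t) '' C) ((· + s) '' C)
  have hRo : IsOpen {p : ℝ × ℝ | R p.1 p.2} :=
    (isOpen_ne_fun continuous_fst continuous_snd).inter hC.isOpen_setOf_disjoint_image_add_right
  have hRd : ∀ t, Dense {s | R t s} := fun t =>
    (dense_compl_singleton t).inter_of_isOpen_left (dense_setOf_disjoint_image_add_right hCC t)
      isOpen_compl_singleton |>.mono fun s hs => ⟨Ne.symm hs.1, hs.2⟩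
  have hWd : ∀ n, Dense {t | (· + t) '' C ⊆ U n} := fun n =>
    hper.mono fun t ht => (image_mono hCB).trans (ht.trans (iInter_subset _ n))
  obtain ⟨f, hfU, hfR⟩ := exists_nat_bool_map_mem_pairwise_rel hRo
    (fun _ _ h => ⟨h.1.symm, h.2.symm⟩) hRd
    (fun n => hC.isOpen_setOf_image_add_right_subset (hUo n)) hWd
  have hf : Function.Injective f := fun a b hab => by_contra fun h => (hfR h).1 hab
  refine ⟨range f, ?_, ?_, ?_⟩
  · rw [Cardinal.mk_range_eq f hf, Cardinal.mk_arrow, Cardinal.mk_bool, Cardinal.mk_nat,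
      Cardinal.lift_id, Cardinal.lift_id, Cardinal.two_power_aleph0]
  · rintro _ ⟨a, rfl⟩
    exact subset_iInter (hfU a)
  · rintro _ ⟨a, rfl⟩ _ ⟨b, rfl⟩ hab
    exact (hfR (ne_of_apply_ne f hab)).2

theorem stmt4 (B : Set ℝ) (hBdense : Dense B) (hBGδ : IsGδ B)
    (hper : Dense {t : ℝ | (· + t) '' B ⊆ B})
    (C : Set ℝ) (hCB : C ⊆ B) (hC : IsCompact C) (hCC : interior (C - C) = ∅) :
    ∃ T : Set ℝ, Cardinal.mk T = Cardinal.continuum ∧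
      (∀ t ∈ T, (· + t) '' C ⊆ B) ∧
      T.Pairwise (fun t s => Disjoint ((· + t) '' C) ((· + s) '' C)) :=
  stmt4_general B hBGδ hper C hCB hC hCC
end

section
/- Let B ⊆ ℝ be a nonempty G_δ set of Lebesgue measure zero such that {t ∈ ℝ : B + t ⊆ B} is dense in ℝ. Then for every translation invariant Borel measure μ on ℝ, B is either μ-null or not σ-finite for μ. -/
open MeasureTheory Set Filter Metric
open scoped ENNReal Pointwise Topology

/-!
Suppose `B = ⋃ sₙ` with `μ sₙ < ∞` but `μ B > 0`, and pick a compact `C ⊆ B` with `μ C > 0`.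
Since `C` is Lebesgue null, Fubini shows that for Lebesgue-a.e. `t` the translate `C + t` is null
for each of the finite measures `μ|sₙ`; by outer regularity this set of `t` is also a `G_δ`, hence
a dense `G_δ`. The translations `t` with `C + t ⊆ B` form another dense `G_δ` (it contains the
dense set of periods of `B`). By Baire some `t` lies in both, so `μ C = μ (C + t) = 0`.
-/

theorem UpperSemicontinuous.isGδ_setOf_eq_zero {X : Type*} [TopologicalSpace X]
    {f : X → ℝ≥0∞} (hf : UpperSemicontinuous f) : IsGδ {x | f x = 0} := by
  have : {x | f x = 0} = ⋂ n : ℕ, f ⁻¹' Iio (n : ℝ≥0∞)⁻¹ := by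
    ext x
    simp only [mem_ofPred_eq, mem_iInter, mem_preimage, mem_Iio]
    refine ⟨fun hx n => hx ▸ ENNReal.inv_pos.2 (ENNReal.natCast_ne_top n), fun hx => ?_⟩
    by_contra hne
    obtain ⟨n, hn⟩ := ENNReal.exists_inv_nat_lt hne
    exact (hx n).not_gt hn
  rw [this]
  exact .iInter fun n => (upperSemicontinuous_iff_isOpen_preimage.1 hf _).isGδ

section Translates

variable {G : Type*} [AddGroup G]

theorem IsCompact.isOpen_setOf_image_add_subset [TopologicalSpace G] [ContinuousAdd G]
    {C U : Set G} (hC : IsCompact C) (hU : IsOpen U) :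
    IsOpen {t : G | (· + t) '' C ⊆ U} := by
  refine isOpen_iff_eventually.2 fun t ht => ?_
  simp only [mem_ofPred_eq, image_subset_iff] at ht ⊢
  refine hC.eventually_forall_of_forall_eventually fun x hx => ?_
  exact (continuous_snd.add continuous_fst).continuousAt.preimage_mem_nhds (hU.mem_nhds (ht hx))

theorem IsGδ.setOf_image_add_subset [TopologicalSpace G] [ContinuousAdd G] {B C : Set G}
    (hB : IsGδ B) (hC : IsCompact C) : IsGδ {t : G | (· + t) '' C ⊆ B} := by
  obtain ⟨T, hTo, hTc, rfl⟩ := hB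
  have : {t : G | (· + t) '' C ⊆ ⋂₀ T} = ⋂ U ∈ T, {t | (· + t) '' C ⊆ U} := by
    ext t
    simp [subset_sInter_iff]
  rw [this]
  exact .biInter hTc fun U hU => (hC.isOpen_setOf_image_add_subset (hTo U hU)).isGδ

theorem upperSemicontinuous_measure_image_add [TopologicalSpace G] [ContinuousAdd G]
    [MeasurableSpace G] (ν : Measure G) [ν.OuterRegular] {C : Set G} (hC : IsCompact C) :
    UpperSemicontinuous fun t => ν ((· + t) '' C) := by
  intro t c hc
  obtain ⟨U, hCU, hU, hνU⟩ := Set.exists_isOpen_lt_of_lt _ c hc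
  filter_upwards [(hC.isOpen_setOf_image_add_subset hU).mem_nhds hCU] with t' ht'
  exact (measure_mono ht').trans_lt hνU

/-- Fubini on `{(t, x) | x - t ∈ C}`: its `x`-slices `t ∈ x - C` are `μ`-null. -/
theorem ae_measure_image_add_eq_zero [MeasurableSpace G] [MeasurableAdd₂ G] [MeasurableNeg G]
    (μ ν : Measure G) [SFinite μ] [SFinite ν] [μ.IsAddLeftInvariant] [μ.IsNegInvariant]
    {C : Set G} (hC : MeasurableSet C) (hμC : μ C = 0) :
    ∀ᵐ t ∂μ, ν ((· + t) '' C) = 0 := by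
  set S := {p : G × G | p.2 - p.1 ∈ C}
  have hS : MeasurableSet S := hC.preimage (measurable_snd.sub measurable_fst)
  have hprod : μ.prod ν S = 0 := by
    rw [Measure.prod_apply_symm hS]
    refine lintegral_eq_zero_of_ae_eq_zero (Eventually.of_forall fun x => ?_)
    exact ((Measure.measurePreserving_sub_left μ x).measure_preimage hC.nullMeasurableSet).trans
      hμC
  filter_upwards [Measure.measure_ae_null_of_prod_null hprod] with t ht
  simpa [S, image_add_right, sub_eq_add_neg, preimage] using ht

end Translates

theorem stmt5_general (B : Set ℝ) (hBGδ : IsGδ B) (hB0 : volume B = 0)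
    (hper : Dense {t : ℝ | (· + t) '' B ⊆ B}) :
    ∀ μ : Measure ℝ, TransInv μ → μ B = 0 ∨ ¬ SigmaFiniteOn μ B := by
  intro μ hμ
  refine or_iff_not_imp_right.2 fun hσ => ?_
  obtain ⟨s, hs, hfin, rfl⟩ := not_not.1 hσ
  refine measure_iUnion_null_iff.2 fun n => ?_
  by_contra hn
  obtain ⟨C, hCs, hC, hμC⟩ :=
    (hs n).exists_lt_isCompact_of_ne_top (hfin n).ne (pos_iff_ne_zero.2 hn)
  have hCB : C ⊆ ⋃ m, s m := hCs.trans (subset_iUnion s n)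
  have : ∀ m, IsFiniteMeasure (μ.restrict (s m)) := fun m => ⟨by simpa using hfin m⟩
  have hnull_isGδ m : IsGδ {t | μ.restrict (s m) ((· + t) '' C) = 0} :=
    (upperSemicontinuous_measure_image_add _ hC).isGδ_setOf_eq_zero
  have hnull_dense m : Dense {t | μ.restrict (s m) ((· + t) '' C) = 0} :=
    Measure.dense_of_ae <|
      ae_measure_image_add_eq_zero volume _ hC.measurableSet (measure_mono_null hCB hB0)
  obtain ⟨t, htB, htN⟩ := (Dense.inter_of_Gδ (hBGδ.setOf_image_add_subset hC)
    (.iInter hnull_isGδ) (hper.mono fun t ht => (image_mono hCB).trans ht)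
    (dense_iInter_of_Gδ hnull_isGδ hnull_dense)).nonempty
  have hCt : μ ((· + t) '' C) = 0 := by
    refine measure_mono_null ((subset_inter subset_rfl htB).trans (inter_iUnion _ _).subset)
      (measure_iUnion_null fun m => ?_)
    exact (Measure.restrict_apply' (hs m)).symm.trans (mem_iInter.1 htN m)
  exact hμC.ne' (hμ C hC.measurableSet t ▸ hCt)

theorem stmt5 (B : Set ℝ) (hne : B.Nonempty) (hBGδ : IsGδ B) (hB0 : volume B = 0)
    (hper : Dense {t : ℝ | (· + t) '' B ⊆ B}) :
    ∀ μ : Measure ℝ, TransInv μ → μ B = 0 ∨ ¬ SigmaFiniteOn μ B :=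
  stmt5_general B hBGδ hB0 hper
end

section
/- If A and B are nonempty Borel subsets of ℝ whose symmetric difference is countable, then A is immeasurable if and only if B is immeasurable. -/
open MeasureTheory Set Filter Metric
open scoped ENNReal Pointwise Topology

/-- A nonempty Borel set is *immeasurable* if it is null or non-σ-finite for
every translation invariant Borel measure on `ℝ`. -/
def Immeasurable (B : Set ℝ) : Prop :=
  B.Nonempty ∧ MeasurableSet B ∧
    ∀ μ : Measure ℝ, TransInv μ → μ B = 0 ∨ ¬ SigmaFiniteOn μ B

/-! Translation invariance gives every singleton the same mass `c`. A point of a σ-finite set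
lies in a piece of finite measure, so `c < ∞` as soon as a nonempty set is σ-finite; then
countable sets are σ-finite, and σ-finiteness passes from `B` to `A ⊆ (A ∆ B) ∪ B`. If `A` is
immeasurable this forces `μ A = 0`, hence `c = 0`, hence `A ∆ B` is null and so is `B`. -/

namespace SigmaFiniteOn

variable {μ : Measure ℝ} {S T : Set ℝ}

lemma mono (hS : SigmaFiniteOn μ S) (hTm : MeasurableSet T) (hTS : T ⊆ S) :
    SigmaFiniteOn μ T := by
  obtain ⟨s, hsm, hsf, rfl⟩ := hS
  refine ⟨fun n => T ∩ s n, fun n => hTm.inter (hsm n),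
    fun n => (measure_mono inter_subset_right).trans_lt (hsf n), ?_⟩
  rw [← inter_iUnion, inter_eq_left.mpr hTS]

lemma union (hS : SigmaFiniteOn μ S) (hT : SigmaFiniteOn μ T) : SigmaFiniteOn μ (S ∪ T) := by
  obtain ⟨s, hsm, hsf, rfl⟩ := hS
  obtain ⟨t, htm, htf, rfl⟩ := hT
  exact ⟨fun n => s n ∪ t n, fun n => (hsm n).union (htm n),
    fun n => measure_union_lt_top (hsf n) (htf n), (iUnion_union_distrib _ _).symm⟩

lemma of_countable (hS : S.Countable) (hfin : ∀ x, μ {x} < ⊤) : SigmaFiniteOn μ S := by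
  rcases S.eq_empty_or_nonempty with rfl | hne
  · exact ⟨fun _ => ∅, fun _ => .empty, fun _ => by simp, by simp⟩
  · obtain ⟨f, rfl⟩ := hS.exists_eq_range hne
    exact ⟨fun n => {f n}, fun n => measurableSet_singleton _, fun n => hfin (f n),
      range_eq_iUnion f⟩

lemma measure_singleton_lt_top (hS : SigmaFiniteOn μ S) {x : ℝ} (hx : x ∈ S) :
    μ {x} < ⊤ := by
  obtain ⟨s, -, hsf, rfl⟩ := hS
  obtain ⟨n, hn⟩ := mem_iUnion.mp hx
  exact (measure_mono (singleton_subset_iff.mpr hn)).trans_lt (hsf n)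

end SigmaFiniteOn

namespace TransInv

variable {μ : Measure ℝ}

lemma measure_singleton (hμ : TransInv μ) (x : ℝ) : μ {x} = μ {0} := by
  simpa using hμ {0} (measurableSet_singleton 0) x

lemma measure_countable_eq_zero (hμ : TransInv μ) {S : Set ℝ} (hS : S.Countable)
    (h0 : μ {0} = 0) : μ S = 0 := by
  rw [← biUnion_of_singleton S, measure_biUnion_null_iff hS]
  exact fun x _ => (hμ.measure_singleton x).trans h0

end TransInv

lemma Immeasurable.of_countable_symmDiff {A B : Set ℝ} (hA : Immeasurable A)
    (hB : B.Nonempty) (hBm : MeasurableSet B) (hAB : (symmDiff A B).Countable) :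
    Immeasurable B := by
  obtain ⟨⟨a, ha⟩, hAm, hAμ⟩ := hA
  refine ⟨hB, hBm, fun μ hμ => or_iff_not_imp_right.mpr fun hBσ => ?_⟩
  rw [not_not] at hBσ
  obtain ⟨b, hb⟩ := hB
  have hfin : ∀ x, μ {x} < ⊤ := fun x =>
    hμ.measure_singleton x ▸ hμ.measure_singleton b ▸ hBσ.measure_singleton_lt_top hb
  have hAσ : SigmaFiniteOn μ A :=
    ((SigmaFiniteOn.of_countable hAB hfin).union hBσ).mono hAm (le_symmDiff_sup_right A B)
  have hA0 : μ A = 0 := (hAμ μ hμ).resolve_right (not_not.mpr hAσ)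
  have h0 : μ {0} = 0 :=
    hμ.measure_singleton a ▸ measure_mono_null (singleton_subset_iff.mpr ha) hA0
  exact measure_mono_null (le_symmDiff_sup_left A B)
    (measure_union_null (hμ.measure_countable_eq_zero hAB h0) hA0)

theorem stmt9 (A B : Set ℝ) (hA : A.Nonempty) (hB : B.Nonempty)
    (hAm : MeasurableSet A) (hBm : MeasurableSet B)
    (hcount : (symmDiff A B).Countable) :
    Immeasurable A ↔ Immeasurable B :=
  ⟨fun h => h.of_countable_symmDiff hB hBm hcount,
    fun h => h.of_countable_symmDiff hA hAm (symmDiff_comm A B ▸ hcount)⟩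
end

section
/- Let B ⊆ ℝ be a Borel set with B + B ⊆ B such that B − B (the group generated by B) is not F_σ. Then B is immeasurable: for every translation invariant Borel measure μ on ℝ, B is either μ-null or not σ-finite for μ. -/
/-
If `μ B ≠ 0` and `B` is σ-finite, inner regularity gives a compact `K ⊆ B` with `μ K ≠ 0`.
Since `B + B ⊆ B`, every translate `K + b` with `b ∈ B` lies in `B` and has measure `μ K ≠ 0`,
so by σ-finiteness a maximal pairwise disjoint family of such translates is countable, indexed by
some `C ⊆ B`. Maximality puts every `b ∈ B` into `C + (K - K)`, hence
`B - B = (C - C) + ((K - K) - (K - K))` is a countable union of compact sets.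
-/

open MeasureTheory Set Filter Metric
open scoped ENNReal Pointwise Topology

section Pointwise

variable {α : Type*}

theorem IsCompact.sub [TopologicalSpace α] [AddGroup α] [IsTopologicalAddGroup α] {s t : Set α}
    (hs : IsCompact s) (ht : IsCompact t) : IsCompact (s - t) := by
  rw [sub_eq_add_neg]
  exact hs.add ht.neg

theorem sub_mem_sub_of_not_disjoint_image_add_const [AddCommGroup α] {K : Set α} {a b : α}
    (h : ¬ Disjoint ((· + a) '' K) ((· + b) '' K)) : a - b ∈ K - K := by
  obtain ⟨_, ⟨k₁, hk₁, rfl⟩, ⟨k₂, hk₂, hk⟩⟩ := not_disjoint_iff.1 h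
  exact ⟨k₂, hk₂, k₁, hk₁, sub_eq_sub_iff_add_eq_add.2 (hk.trans (add_comm _ _))⟩

theorem sub_self_eq_sub_add_of_forall_sub_mem [AddCommGroup α] {B C K : Set α}
    (hBB : B + B ⊆ B) (hC : C ⊆ B) (hK : K ⊆ B) (hcov : ∀ b ∈ B, ∃ c ∈ C, b - c ∈ K - K) :
    B - B = (C - C) + ((K - K) - (K - K)) := by
  have add_mem {x y : α} (hx : x ∈ B) (hy : y ∈ B) : x + y ∈ B := hBB (add_mem_add hx hy)
  refine Subset.antisymm ?_ ?_
  · rintro _ ⟨b₁, hb₁, b₂, hb₂, rfl⟩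
    obtain ⟨c₁, hc₁, h₁⟩ := hcov b₁ hb₁
    obtain ⟨c₂, hc₂, h₂⟩ := hcov b₂ hb₂
    exact ⟨c₁ - c₂, sub_mem_sub hc₁ hc₂, (b₁ - c₁) - (b₂ - c₂), sub_mem_sub h₁ h₂,
      (by abel : c₁ - c₂ + (b₁ - c₁ - (b₂ - c₂)) = b₁ - b₂)⟩
  · rintro _ ⟨_, ⟨c₁, hc₁, c₂, hc₂, rfl⟩, _,
      ⟨_, ⟨k₁, hk₁, k₂, hk₂, rfl⟩, _, ⟨k₃, hk₃, k₄, hk₄, rfl⟩, rfl⟩, rfl⟩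
    exact ⟨c₁ + k₁ + k₄, add_mem (add_mem (hC hc₁) (hK hk₁)) (hK hk₄),
      c₂ + k₂ + k₃, add_mem (add_mem (hC hc₂) (hK hk₂)) (hK hk₃),
      (by abel : c₁ + k₁ + k₄ - (c₂ + k₂ + k₃) = c₁ - c₂ + (k₁ - k₂ - (k₃ - k₄)))⟩

theorem Set.Countable.exists_isClosed_seq_add_eq [TopologicalSpace α] [AddGroup α]
    [ContinuousAdd α] [T2Space α] {D W : Set α} (hD : D.Countable) (hW : IsCompact W) :
    ∃ F : ℕ → Set α, (∀ n, IsClosed (F n)) ∧ D + W = ⋃ n, F n := by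
  rcases D.eq_empty_or_nonempty with rfl | hne
  · exact ⟨fun _ => ∅, fun _ => isClosed_empty, by simp⟩
  obtain ⟨f, rfl⟩ := hD.exists_eq_range hne
  refine ⟨fun n => (f n + ·) '' W, fun n => (hW.image (continuous_const_add (f n))).isClosed, ?_⟩
  rw [← iUnion_add_left_image, biUnion_range]

end Pointwise

section PairwiseDisjoint

variable {α ι : Type*}

theorem exists_maximal_pairwiseDisjoint (A : Set ι) (f : ι → Set α) :
    ∃ P, Maximal (fun P => P ⊆ A ∧ P.PairwiseDisjoint f) P :=
  zorn_subset _ fun c hc hchain =>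
    ⟨⋃₀ c, ⟨sUnion_subset fun _ hs => (hc hs).1,
      (hchain.pairwiseDisjoint_sUnion f).2 fun _ hs => (hc hs).2⟩, fun _ => subset_sUnion_of_mem⟩

theorem Maximal.exists_not_disjoint_of_pairwiseDisjoint {A P : Set ι} {f : ι → Set α}
    (hP : Maximal (fun P => P ⊆ A ∧ P.PairwiseDisjoint f) P) {a : ι} (ha : a ∈ A)
    (hfa : (f a).Nonempty) : ∃ c ∈ P, ¬ Disjoint (f a) (f c) := by
  by_contra! h
  have haP : a ∈ P :=
    hP.mem_of_prop_insert ⟨insert_subset ha hP.prop.1, hP.prop.2.insert fun c hc _ => h c hc⟩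
  exact hfa.ne_empty (disjoint_self.1 (h a haP))

theorem exists_countable_forall_measure_ne_zero_not_disjoint [MeasurableSpace α] (ν : Measure α)
    [SFinite ν] {f : ι → Set α} (hf : ∀ i, MeasurableSet (f i)) (A : Set ι) :
    ∃ C ⊆ A, C.Countable ∧ ∀ a ∈ A, ν (f a) ≠ 0 → ∃ c ∈ C, ¬ Disjoint (f a) (f c) := by
  obtain ⟨P, hP⟩ := exists_maximal_pairwiseDisjoint {a ∈ A | ν (f a) ≠ 0} f
  have hPcount : P.Countable := by
    have := Measure.countable_meas_pos_of_disjoint_iUnion (μ := ν) (fun i : P => hf i)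
      fun i j hij => hP.prop.2 i.2 j.2 (Subtype.coe_injective.ne hij)
    exact countable_coe_iff.1 <| countable_univ_iff.1 <|
      this.mono fun i _ => pos_iff_ne_zero.2 (hP.prop.1 i.2).2
  refine ⟨P, fun c hc => (hP.prop.1 hc).1, hPcount, fun a ha hfa => ?_⟩
  exact hP.exists_not_disjoint_of_pairwiseDisjoint ⟨ha, hfa⟩ (nonempty_of_measure_ne_zero hfa)

end PairwiseDisjoint

namespace SigmaFiniteOn

variable {μ : Measure ℝ} {B : Set ℝ}

theorem exists_isCompact_subset_measure_ne_zero (hσ : SigmaFiniteOn μ B) (hB : μ B ≠ 0) :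
    ∃ K ⊆ B, IsCompact K ∧ μ K ≠ 0 := by
  obtain ⟨s, hsm, hsfin, rfl⟩ := hσ
  obtain ⟨n, hn⟩ : ∃ n, μ (s n) ≠ 0 := by simpa [measure_iUnion_null_iff] using hB
  have : IsFiniteMeasure (μ.restrict (s n)) := isFiniteMeasure_restrict.2 (hsfin n).ne
  obtain ⟨K, hKs, hK, hμK⟩ := (hsm n).exists_lt_isCompact_of_ne_top (μ := μ.restrict (s n))
    (measure_ne_top _ _) (by simpa [Measure.restrict_apply_self] using pos_iff_ne_zero.2 hn)
  exact ⟨K, hKs.trans (subset_iUnion s n), hK, (hμK.trans_le (Measure.restrict_le_self K)).ne'⟩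

theorem exists_sFinite_le (hσ : SigmaFiniteOn μ B) :
    ∃ ν : Measure ℝ, SFinite ν ∧ ∀ t ⊆ B, μ t ≤ ν t := by
  obtain ⟨s, -, hsfin, rfl⟩ := hσ
  have : ∀ n, IsFiniteMeasure (μ.restrict (s n)) := fun n => isFiniteMeasure_restrict.2 (hsfin n).ne
  refine ⟨Measure.sum fun n => μ.restrict (s n), inferInstance, fun t ht => ?_⟩
  rw [← Measure.restrict_eq_self μ ht]
  exact Measure.le_iff'.1 Measure.restrict_iUnion_le t

end SigmaFiniteOn

theorem stmt12_general (B : Set ℝ) (hBB : B + B ⊆ B)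
    (hFσ : ¬ ∃ F : ℕ → Set ℝ, (∀ n, IsClosed (F n)) ∧ B - B = ⋃ n, F n) :
    ∀ μ : Measure ℝ, TransInv μ → μ B = 0 ∨ ¬ SigmaFiniteOn μ B := by
  intro μ hμ
  refine or_iff_not_imp_left.2 fun hμB hσ => hFσ ?_
  obtain ⟨K, hKB, hK, hμK⟩ := hσ.exists_isCompact_subset_measure_ne_zero hμB
  obtain ⟨ν, _, hμν⟩ := hσ.exists_sFinite_le
  have hT (b : ℝ) : IsCompact ((· + b) '' K) := hK.image (continuous_add_const b)
  obtain ⟨C, hCB, hC, hCT⟩ :=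
    exists_countable_forall_measure_ne_zero_not_disjoint ν (fun b => (hT b).measurableSet) B
  have hcov : ∀ b ∈ B, ∃ c ∈ C, b - c ∈ K - K := by
    intro b hb
    have hTB : (· + b) '' K ⊆ B := image_subset_iff.2 fun k hk => hBB (add_mem_add (hKB hk) hb)
    have hνT : ν ((· + b) '' K) ≠ 0 := fun h => hμK <| by
      rw [← hμ K hK.measurableSet b]
      exact le_zero_iff.1 (h ▸ hμν _ hTB)
    obtain ⟨c, hc, hbc⟩ := hCT b hb hνT
    exact ⟨c, hc, sub_mem_sub_of_not_disjoint_image_add_const hbc⟩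
  rw [sub_self_eq_sub_add_of_forall_sub_mem hBB hCB hKB hcov]
  exact (hC.image2 hC (· - ·)).exists_isClosed_seq_add_eq ((hK.sub hK).sub (hK.sub hK))

theorem stmt12 (B : Set ℝ) (hB : MeasurableSet B) (hBB : B + B ⊆ B)
    (hFσ : ¬ ∃ F : ℕ → Set ℝ, (∀ n, IsClosed (F n)) ∧ B - B = ⋃ n, F n) :
    ∀ μ : Measure ℝ, TransInv μ → μ B = 0 ∨ ¬ SigmaFiniteOn μ B :=
  stmt12_general B hBB hFσ
end

section
/- Every Borel additive subgroup of ℝ that is not F_σ is immeasurable: for every translation invariant Borel measure μ on ℝ, it is either μ-null or not σ-finite for μ. -/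
/-!
Suppose `μ G ≠ 0` and `G` is σ-finite for `μ`. By inner regularity of the σ-finite measure
`μ.restrict G` there is a compact `K ⊆ G` with `μ K > 0`. Take a maximal `T ⊆ G` whose
translates `t + K` are pairwise disjoint. These translates lie in `G` and, by translation
invariance, all have measure `μ K > 0`, so σ-finiteness makes `T` countable. Maximality gives
`G = ⋃ t ∈ T, t + (K - K)`, a countable union of compact sets, so `G` is `F_σ`.
-/

open MeasureTheory Set Filter Metric
open scoped ENNReal Pointwise Topology

theorem exists_pairwiseDisjoint_vadd_subset_biUnion_vadd_sub {α : Type*} [AddGroup α]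
    (A : Set α) {K : Set α} (hK : K.Nonempty) :
    ∃ T ⊆ A, T.PairwiseDisjoint (· +ᵥ K) ∧ A ⊆ ⋃ t ∈ T, t +ᵥ (K - K) := by
  obtain ⟨T, ⟨hTA, hT⟩, hmax⟩ :=
    zorn_subset {T | T ⊆ A ∧ T.PairwiseDisjoint (· +ᵥ K)} fun c hcS hc =>
      ⟨⋃₀ c, ⟨sUnion_subset fun T hT => (hcS hT).1,
        (hc.pairwiseDisjoint_sUnion _).2 fun T hT => (hcS hT).2⟩, fun _ => subset_sUnion_of_mem⟩
  refine ⟨T, hTA, hT, fun g hg => ?_⟩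
  obtain ⟨t, htT, hgt⟩ : ∃ t ∈ T, ¬Disjoint (g +ᵥ K) (t +ᵥ K) := by
    by_cases hgT : g ∈ T
    · exact ⟨g, hgT, disjoint_self.not.2 (hK.vadd_set (a := g)).ne_empty⟩
    · by_contra! h
      exact hgT <| hmax
        ⟨insert_subset hg hTA, pairwiseDisjoint_insert.2 ⟨hT, fun t ht _ => h t ht⟩⟩
        (subset_insert g T) (mem_insert g T)
  obtain ⟨_, ⟨k, hk, rfl⟩, k', hk', hkk'⟩ := not_disjoint_iff.1 hgt
  refine mem_biUnion htT ⟨k' - k, sub_mem_sub hk' hk, ?_⟩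
  simp only [vadd_eq_add] at hkk' ⊢
  rw [sub_eq_add_neg, ← add_assoc, hkk', add_neg_cancel_right]

theorem Set.PairwiseDisjoint.countable_of_measure_pos {ι α : Type*} [MeasurableSpace α]
    {μ : Measure α} [SFinite μ] {s : Set ι} {f : ι → Set α} (hs : s.PairwiseDisjoint f)
    (hf : ∀ i ∈ s, MeasurableSet (f i)) (hpos : ∀ i ∈ s, 0 < μ (f i)) : s.Countable := by
  have h := Measure.countable_meas_pos_of_disjoint_iUnion (μ := μ) (As := fun i : s => f i)
    (fun i => hf i i.2) fun i j hij => hs i.2 j.2 (Subtype.coe_ne_coe.2 hij)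
  have hall : {i : s | 0 < μ (f i)} = univ := eq_univ_of_forall fun i => hpos i i.2
  rw [hall] at h
  exact countable_coe_iff.1 (countable_univ_iff.1 h)

theorem AddMemClass.vadd_set_subset {S α : Type*} [Add α] [SetLike S α] [AddMemClass S α]
    (H : S) {t : α} (ht : t ∈ H) {C : Set α} (hC : C ⊆ H) : t +ᵥ C ⊆ H := by
  rintro _ ⟨c, hc, rfl⟩
  exact add_mem ht (hC hc)

namespace SigmaFiniteOn

variable {μ : Measure ℝ} {B : Set ℝ}

theorem measurableSet (h : SigmaFiniteOn μ B) : MeasurableSet B := by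
  obtain ⟨s, hs, -, rfl⟩ := h
  exact .iUnion hs

theorem sigmaFinite_restrict_s13 (h : SigmaFiniteOn μ B) : SigmaFinite (μ.restrict B) := by
  obtain ⟨s, hsm, hs, rfl⟩ := h
  refine Measure.sigmaFinite_of_countable (S := insert (⋃ n, s n)ᶜ (range s))
    ((countable_range s).insert _) ?_ ?_
  · rintro _ (rfl | ⟨n, rfl⟩)
    · rw [Measure.restrict_apply' (.iUnion hsm), compl_inter_self, measure_empty]
      exact ENNReal.zero_lt_top
    · exact (Measure.restrict_le_self _).trans_lt (hs n)
  · rw [sUnion_insert, sUnion_range, compl_union_self]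

end SigmaFiniteOn

theorem TransInv.measure_vadd {μ : Measure ℝ} (h : TransInv μ) (t : ℝ) {A : Set ℝ}
    (hA : MeasurableSet A) : μ (t +ᵥ A) = μ A := by
  rw [← image_vadd]
  simp_rw [vadd_eq_add, add_comm t]
  exact h A hA t

theorem stmt13_general (G : AddSubgroup ℝ)
    (hFσ : ¬ ∃ F : ℕ → Set ℝ, (∀ n, IsClosed (F n)) ∧ (G : Set ℝ) = ⋃ n, F n) :
    ∀ μ : Measure ℝ, TransInv μ →
      μ (G : Set ℝ) = 0 ∨ ¬ SigmaFiniteOn μ (G : Set ℝ) := by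
  intro μ hμ
  by_contra! ⟨hG0, hGσ⟩
  have := hGσ.sigmaFinite_restrict_s13
  obtain ⟨K, hKG, hK, hKpos⟩ := hGσ.measurableSet.exists_lt_isCompact (μ := μ.restrict G)
    (r := 0) (by rwa [Measure.restrict_apply_self, pos_iff_ne_zero])
  rw [Measure.restrict_eq_self _ hKG] at hKpos
  obtain ⟨T, hTG, hTdisj, hGT⟩ :=
    exists_pairwiseDisjoint_vadd_subset_biUnion_vadd_sub (G : Set ℝ)
      (nonempty_of_measure_ne_zero hKpos.ne')
  have hT : T.Countable := hTdisj.countable_of_measure_pos (μ := μ.restrict G)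
    (fun t _ => (hK.vadd t).isClosed.measurableSet) fun t ht => by
      rwa [Measure.restrict_eq_self _ (AddMemClass.vadd_set_subset G (hTG ht) hKG),
        hμ.measure_vadd t hK.isClosed.measurableSet]
  obtain ⟨t₀, ht₀, -⟩ := mem_iUnion₂.1 (hGT G.zero_mem)
  obtain ⟨f, rfl⟩ := hT.exists_eq_range ⟨t₀, ht₀⟩
  have hKK : IsCompact (K - K) := by simpa only [sub_eq_add_neg] using hK.add hK.neg
  have hKKG : K - K ⊆ G := sub_subset_iff.2 fun a ha b hb => G.sub_mem (hKG ha) (hKG hb)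
  rw [biUnion_range] at hGT
  refine hFσ ⟨fun n => f n +ᵥ (K - K), fun n => hKK.isClosed.vadd _, ?_⟩
  exact hGT.antisymm <| iUnion_subset fun n =>
    AddMemClass.vadd_set_subset G (hTG (mem_range_self n)) hKKG

theorem stmt13 (G : AddSubgroup ℝ) (hG : MeasurableSet (G : Set ℝ))
    (hFσ : ¬ ∃ F : ℕ → Set ℝ, (∀ n, IsClosed (F n)) ∧ (G : Set ℝ) = ⋃ n, F n) :
    ∀ μ : Measure ℝ, TransInv μ →
      μ (G : Set ℝ) = 0 ∨ ¬ SigmaFiniteOn μ (G : Set ℝ) :=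
  stmt13_general G hFσ
end

section
/- Let BE(1,0) = {x ∈ ℝ : the dyadic digits d₁d₂… of the fractional part of x satisfy lim_{n→∞} #{i ≤ n : dᵢ = 1}/n = 0}, and let G = {x ∈ ℝ : {n : d_n ≠ d_{n+1}} has density zero}. Then BE(1,0) − BE(1,0) = G. -/
/-!
If the binary digits of `x` and `y` in positions `k + 1` and `k + 2` all vanish, the fractional
parts of `2 ^ k * x` and `2 ^ k * y` lie in `[0, 1/4)`, so that of `2 ^ k * (x - y)` lies in
`[0, 1/4) ∪ (3/4, 1)`, where those two digits of `x - y` agree. Hence `x - y` changes digits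
only next to a `1` of `x` or of `y`.

Conversely, a run of `1`s in positions `a + 1, …, b` contributes `2⁻ᵃ - 2⁻ᵇ` to a binary
expansion. So `z = x - y`, where `x` carries a `1` at the start of every run of `1`s of `z`
(the ascents of its digit sequence) and `y` at the end of every run (the descents). Neither
sequence has two consecutive `1`s, so they are the binary digits of `x` and `y`, and both
are supported on the digit changes of `z`.
-/

open MeasureTheory Set Filter Metric
open scoped ENNReal Pointwise Topology

/-- The `i`-th binary digit (`i ≥ 1`) of the fractional part of `x`
(this picks the expansion with finitely many nonzero digits when ambiguous). -/
noncomputable def binDigit (x : ℝ) (i : ℕ) : ℤ := ⌊Int.fract x * 2 ^ i⌋ % 2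

/-- The Besicovitch–Eggleston class `BE(1,0)`: reals whose binary digits
contain `1`'s only on a set of density zero. -/
def BE10 : Set ℝ :=
  {x : ℝ | Tendsto
    (fun n : ℕ => (((Finset.Icc 1 n).filter (fun i => binDigit x i = 1)).card : ℝ) / n)
    atTop (𝓝 0)}

/-- The set of reals whose binary digits satisfy `d_n = d_{n+1}` for all `n`
outside a set of density zero. -/
def GSet : Set ℝ :=
  {x : ℝ | Tendsto
    (fun n : ℕ => (((Finset.Icc 1 n).filter (fun i => binDigit x i ≠ binDigit x (i + 1))).card : ℝ) / n)
    atTop (𝓝 0)}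

def HasDensityZero (p : ℕ → Prop) [DecidablePred p] : Prop :=
  Tendsto (fun n : ℕ => (((Finset.Icc 1 n).filter p).card : ℝ) / n) atTop (𝓝 0)

namespace HasDensityZero

variable {p q : ℕ → Prop} [DecidablePred p] [DecidablePred q]

lemma mono (hq : HasDensityZero q) (h : ∀ i, 1 ≤ i → p i → q i) : HasDensityZero p := by
  refine squeeze_zero (fun n => by positivity) (fun n => ?_) hq
  gcongr with i hi
  exact h i (Finset.mem_Icc.mp hi).1

lemma or (hp : HasDensityZero p) (hq : HasDensityZero q) :
    HasDensityZero (fun i => p i ∨ q i) := by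
  refine squeeze_zero (fun n => by positivity) (fun n => ?_) (by simpa using hp.add hq)
  rw [Finset.filter_or, ← add_div]
  gcongr
  exact_mod_cast Finset.card_union_le _ _

lemma comp_succ (hp : HasDensityZero p) : HasDensityZero (fun i => p (i + 1)) := by
  have hshift : Tendsto (fun n : ℕ => 2 * ((((Finset.Icc 1 (n + 1)).filter p).card : ℝ) / ↑(n + 1)))
      atTop (𝓝 0) := by
    simpa using (hp.comp (tendsto_add_atTop_nat 1)).const_mul 2
  refine squeeze_zero' (.of_forall fun n => by positivity) ?_ hshift
  filter_upwards [eventually_ge_atTop 1] with n hn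
  have hcard : ((Finset.Icc 1 n).filter (fun i => p (i + 1))).card ≤
      ((Finset.Icc 1 (n + 1)).filter p).card := by
    refine Finset.card_le_card_of_injOn (· + 1) (fun i hi => ?_) (fun i _ j _ h => by simpa using h)
    simp only [Finset.coe_filter, Finset.mem_Icc, Set.mem_ofPred_eq] at hi ⊢
    exact ⟨⟨by omega, by omega⟩, hi.2⟩
  have hn' : (1 : ℝ) ≤ n := by exact_mod_cast hn
  calc (((Finset.Icc 1 n).filter (fun i => p (i + 1))).card : ℝ) / n
      ≤ ((Finset.Icc 1 (n + 1)).filter p).card / n := by gcongr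
    _ ≤ 2 * (((Finset.Icc 1 (n + 1)).filter p).card / ↑(n + 1)) := by
      rw [mul_div_assoc', div_le_div_iff₀ (by positivity) (by positivity)]
      push_cast
      nlinarith [Nat.cast_nonneg (α := ℝ) ((Finset.Icc 1 (n + 1)).filter p).card]

end HasDensityZero

lemma binDigit_eq_zero_of_ne_one {x : ℝ} {i : ℕ} (h : binDigit x i ≠ 1) : binDigit x i = 0 := by
  unfold binDigit at h ⊢; omega

lemma binDigit_intCast_add (m : ℤ) (x : ℝ) (i : ℕ) : binDigit (m + x) i = binDigit x i := by
  simp [binDigit]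

lemma binDigit_succ (x : ℝ) (k : ℕ) : binDigit x (k + 1) = ⌊2 * Int.fract (x * 2 ^ k)⌋ := by
  set u := Int.fract (x * 2 ^ k)
  obtain ⟨N, hN⟩ := Int.fract_mul_natCast x (2 ^ k)
  push_cast at hN
  have h0 : 0 ≤ ⌊2 * u⌋ := Int.floor_nonneg.2 (by positivity)
  have h1 : ⌊2 * u⌋ < 2 := Int.floor_lt.2 (by push_cast; linarith [Int.fract_lt_one (x * 2 ^ k)])
  have hsplit : Int.fract x * 2 ^ (k + 1) = ((2 * N : ℤ) : ℝ) + 2 * u := by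
    push_cast; rw [pow_succ]; linarith
  rw [binDigit, hsplit, Int.floor_intCast_add]
  omega

lemma binDigit_add_two (x : ℝ) (k : ℕ) :
    binDigit x (k + 2) = ⌊2 * Int.fract (2 * Int.fract (x * 2 ^ k))⌋ := by
  rw [binDigit_succ, Int.fract_eq_fract.2 ⟨2 * ⌊x * 2 ^ k⌋, ?_⟩]
  rw [← Int.self_sub_floor, pow_succ]; push_cast; ring

lemma fract_lt_quarter_of_binDigit_eq_zero {x : ℝ} {k : ℕ} (h1 : binDigit x (k + 1) = 0)
    (h2 : binDigit x (k + 2) = 0) : Int.fract (x * 2 ^ k) < 1 / 4 := by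
  rw [binDigit_succ, Int.floor_eq_zero_iff] at h1
  rw [binDigit_add_two, Int.fract_eq_self.2 h1, Int.floor_eq_zero_iff] at h2
  linarith [h2.2]

lemma binDigit_succ_eq_binDigit_add_two {x : ℝ} {k : ℕ}
    (h : Int.fract (x * 2 ^ k) < 1 / 4 ∨ 3 / 4 < Int.fract (x * 2 ^ k)) :
    binDigit x (k + 1) = binDigit x (k + 2) := by
  rw [binDigit_succ, binDigit_add_two]
  set u := Int.fract (x * 2 ^ k)
  have h0 : 0 ≤ u := Int.fract_nonneg _
  have h1 : u < 1 := Int.fract_lt_one _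
  rcases h with h | h
  · have hfr : Int.fract (2 * u) = 2 * u := Int.fract_eq_self.2 ⟨by linarith, by linarith⟩
    rw [hfr, Int.floor_eq_zero_iff.2 ⟨by linarith, by linarith⟩,
      Int.floor_eq_zero_iff.2 ⟨by linarith, by linarith⟩]
  · have hfr : Int.fract (2 * u) = 2 * u - 1 :=
      Int.fract_eq_iff.2 ⟨by linarith, by linarith, 1, by simp⟩
    have hfl₁ : ⌊2 * u⌋ = 1 := Int.floor_eq_iff.2 ⟨by push_cast; linarith, by push_cast; linarith⟩
    have hfl₂ : ⌊2 * (2 * u - 1)⌋ = 1 :=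
      Int.floor_eq_iff.2 ⟨by push_cast; linarith, by push_cast; linarith⟩
    rw [hfr, hfl₁, hfl₂]

lemma fract_sub_of_fract_lt_quarter {a b : ℝ} (ha : Int.fract a < 1 / 4) (hb : Int.fract b < 1 / 4) :
    Int.fract (a - b) < 1 / 4 ∨ 3 / 4 < Int.fract (a - b) := by
  have ha0 := Int.fract_nonneg a
  have hb0 := Int.fract_nonneg b
  have hab : a - b - (Int.fract a - Int.fract b) = ((⌊a⌋ - ⌊b⌋ : ℤ) : ℝ) := by
    push_cast; rw [← Int.self_sub_floor, ← Int.self_sub_floor]; ring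
  rcases le_or_gt (Int.fract b) (Int.fract a) with hle | hlt
  · left
    rw [Int.fract_eq_iff.2 ⟨by linarith, by linarith, _, hab⟩]
    linarith
  · right
    rw [(Int.fract_eq_iff (b := Int.fract a - Int.fract b + 1)).2
      ⟨by linarith, by linarith, ⌊a⌋ - ⌊b⌋ - 1, by push_cast at hab ⊢; linarith⟩]
    linarith

lemma binDigit_sub_succ_eq_binDigit_add_two {x y : ℝ} {k : ℕ}
    (hx₁ : binDigit x (k + 1) = 0) (hx₂ : binDigit x (k + 2) = 0)
    (hy₁ : binDigit y (k + 1) = 0) (hy₂ : binDigit y (k + 2) = 0) :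
    binDigit (x - y) (k + 1) = binDigit (x - y) (k + 2) := by
  apply binDigit_succ_eq_binDigit_add_two
  rw [sub_mul]
  exact fract_sub_of_fract_lt_quarter (fract_lt_quarter_of_binDigit_eq_zero hx₁ hx₂)
    (fract_lt_quarter_of_binDigit_eq_zero hy₁ hy₂)

lemma sub_mem_GSet {x y : ℝ} (hx : x ∈ BE10) (hy : y ∈ BE10) : x - y ∈ GSet := by
  have hx' : HasDensityZero (fun i => binDigit x i = 1) := hx
  have hy' : HasDensityZero (fun i => binDigit y i = 1) := hy
  refine ((hx'.or hx'.comp_succ).or (hy'.or hy'.comp_succ)).mono fun i hi hchange => ?_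
  obtain ⟨k, rfl⟩ := Nat.exists_eq_add_of_le' hi
  by_contra! h
  obtain ⟨⟨hx₁, hx₂⟩, hy₁, hy₂⟩ := h
  exact hchange (binDigit_sub_succ_eq_binDigit_add_two (binDigit_eq_zero_of_ne_one hx₁)
    (binDigit_eq_zero_of_ne_one hx₂) (binDigit_eq_zero_of_ne_one hy₁) (binDigit_eq_zero_of_ne_one hy₂))

namespace Real

lemma ofDigits_lt_one {b : ℕ} {d : ℕ → Fin b} {k : ℕ} (hk : (d k : ℕ) + 1 < b) :
    ofDigits d < 1 := by
  have hb : 1 < b := by omega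
  rw [← ofDigits_const_last_eq_one' hb]
  refine Summable.tsum_lt_tsum (i := k) (fun i => ?_) ?_ summable_ofDigitsTerm summable_ofDigitsTerm
  · unfold ofDigitsTerm
    gcongr
    have := (d i).isLt
    exact_mod_cast (by omega : (d i : ℕ) ≤ b - 1)
  · unfold ofDigitsTerm
    gcongr
    exact_mod_cast (by omega : (d k : ℕ) < b - 1)

lemma ofDigits_mul_base {b : ℕ} (d : ℕ → Fin b) :
    ofDigits d * b = d 0 + ofDigits (fun i => d (i + 1)) := by
  have hb : (b : ℝ) ≠ 0 := by exact_mod_cast (Fin.pos (d 0)).ne'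
  rw [ofDigits_eq_sum_add_ofDigits d 1]
  simp [ofDigitsTerm]
  field_simp

lemma fract_ofDigits_mul_pow {b : ℕ} {d : ℕ → Fin b} (hd : ∀ n, ∃ k ≥ n, (d k : ℕ) + 1 < b)
    (n : ℕ) : Int.fract (ofDigits d * b ^ n) = ofDigits (fun i => d (i + n)) := by
  induction n with
  | zero =>
    obtain ⟨k, -, hk⟩ := hd 0
    simpa using ⟨ofDigits_nonneg d, ofDigits_lt_one hk⟩
  | succ n ih =>
    obtain ⟨m, hm⟩ := Int.fract_mul_natCast (ofDigits d * b ^ n) b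
    obtain ⟨k, hkn, hk⟩ := hd (n + 1)
    have hlt : ofDigits (fun i => d (i + (n + 1))) < 1 :=
      ofDigits_lt_one (k := k - (n + 1)) (by rwa [Nat.sub_add_cancel hkn])
    rw [ih, ofDigits_mul_base] at hm
    simp only [zero_add, add_assoc, add_comm 1 n] at hm
    have hfract : Int.fract (ofDigits d * b ^ n * b) = ofDigits (fun i => d (i + (n + 1))) +
        ((d n - m : ℤ) : ℝ) := by
      push_cast; linarith
    rw [pow_succ, ← mul_assoc, ← Int.fract_fract, hfract, Int.fract_add_intCast,
      Int.fract_eq_self.2 ⟨ofDigits_nonneg _, hlt⟩]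

end Real

lemma binDigit_ofDigits {d : ℕ → Fin 2} (hd : ∀ n, ∃ k ≥ n, d k = 0) (n : ℕ) :
    binDigit (Real.ofDigits d) (n + 1) = (d n : ℕ) := by
  have hd' : ∀ n, ∃ k ≥ n, (d k : ℕ) + 1 < 2 := fun n =>
    (hd n).imp fun k ⟨hkn, hk⟩ => ⟨hkn, by simp [hk]⟩
  obtain ⟨k, hkn, hk⟩ := hd' (n + 1)
  have hlt : Real.ofDigits (fun i => d (i + 1 + n)) < 1 :=
    Real.ofDigits_lt_one (k := k - (n + 1)) (by rwa [add_assoc, add_comm 1, Nat.sub_add_cancel hkn])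
  have := Real.ofDigits_mul_base (fun i => d (i + n))
  rw [binDigit_succ, ← Nat.cast_ofNat, Real.fract_ofDigits_mul_pow hd', mul_comm, this, zero_add]
  exact Int.floor_eq_iff.2 ⟨by simp [Real.ofDigits_nonneg], by push_cast; linarith⟩

lemma binDigit_succ_eq_digits (x : ℝ) (i : ℕ) :
    binDigit x (i + 1) = (Real.digits (Int.fract x) 2 i : ℕ) := by
  rw [binDigit, Real.digits, Fin.val_ofNat, Int.natCast_mod, Int.natCast_floor_eq_floor (by positivity)]
  norm_num

def ascents (c : ℕ → Fin 2) (j : ℕ) : Fin 2 := if c j < c (j + 1) then 1 else 0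

def descents (c : ℕ → Fin 2) (j : ℕ) : Fin 2 := if c (j + 1) < c j then 1 else 0

lemma ne_of_ascents_eq_one {c : ℕ → Fin 2} {j : ℕ} (h : ascents c j = 1) : c j ≠ c (j + 1) := by
  unfold ascents at h; split_ifs at h with hlt; exacts [hlt.ne, absurd h (by decide)]

lemma ne_of_descents_eq_one {c : ℕ → Fin 2} {j : ℕ} (h : descents c j = 1) : c j ≠ c (j + 1) := by
  unfold descents at h; split_ifs at h with hlt; exacts [hlt.ne', absurd h (by decide)]

lemma exists_ge_ascents_eq_zero (c : ℕ → Fin 2) (n : ℕ) : ∃ k ≥ n, ascents c k = 0 := by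
  by_cases h : c n < c (n + 1)
  · refine ⟨n + 1, n.le_succ, if_neg ?_⟩
    simp only [Fin.lt_def] at h ⊢
    omega
  · exact ⟨n, le_rfl, if_neg h⟩

lemma exists_ge_descents_eq_zero (c : ℕ → Fin 2) (n : ℕ) : ∃ k ≥ n, descents c k = 0 := by
  by_cases h : c (n + 1) < c n
  · refine ⟨n + 1, n.le_succ, if_neg ?_⟩
    simp only [Fin.lt_def] at h ⊢
    omega
  · exact ⟨n, le_rfl, if_neg h⟩

lemma ascents_sub_descents (c : ℕ → Fin 2) (j : ℕ) :
    ((ascents c j : ℕ) : ℝ) - (descents c j : ℕ) = (c (j + 1) : ℕ) - (c j : ℕ) := by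
  unfold ascents descents
  generalize c j = a, c (j + 1) = b
  fin_cases a <;> fin_cases b <;> norm_num

lemma ofDigits_ascents_sub_ofDigits_descents (c : ℕ → Fin 2) :
    Real.ofDigits (ascents c) - Real.ofDigits (descents c) = Real.ofDigits c - (c 0 : ℕ) := by
  have hc : HasSum (Real.ofDigitsTerm c) (Real.ofDigits c) := Real.summable_ofDigitsTerm.hasSum
  have htail := (hasSum_nat_add_iff' 1).2 hc
  have hdiff : HasSum (fun j => Real.ofDigitsTerm (ascents c) j - Real.ofDigitsTerm (descents c) j)
      (Real.ofDigits (ascents c) - Real.ofDigits (descents c)) :=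
    Real.summable_ofDigitsTerm.hasSum.sub Real.summable_ofDigitsTerm.hasSum
  refine hdiff.unique ((htail.mul_left 2).sub hc |>.congr_fun fun j => ?_) |>.trans ?_
  · simp only [Real.ofDigitsTerm, ← sub_mul, ascents_sub_descents]
    push_cast
    ring
  · simp [Real.ofDigitsTerm]
    ring

lemma intCast_add_mem_BE10 (m : ℤ) {x : ℝ} (hx : x ∈ BE10) : (m + x) ∈ BE10 := by
  simpa only [BE10, Set.mem_ofPred_eq, binDigit_intCast_add] using hx

lemma ofDigits_mem_BE10 {d : ℕ → Fin 2} (hd : ∀ n, ∃ k ≥ n, d k = 0) {z : ℝ} (hz : z ∈ GSet)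
    (hdz : ∀ j, d j = 1 → binDigit z (j + 1) ≠ binDigit z (j + 2)) : Real.ofDigits d ∈ BE10 := by
  refine HasDensityZero.mono hz fun i hi hone => ?_
  obtain ⟨j, rfl⟩ := Nat.exists_eq_add_of_le' hi
  rw [binDigit_ofDigits hd] at hone
  exact hdz j (Fin.ext (by exact_mod_cast hone))

lemma mem_BE10_sub_BE10 {z : ℝ} (hz : z ∈ GSet) : z ∈ BE10 - BE10 := by
  set c := Real.digits (Int.fract z) 2
  have hfract : Real.ofDigits c = Int.fract z :=
    Real.ofDigits_digits one_lt_two ⟨Int.fract_nonneg z, Int.fract_lt_one z⟩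
  have hchange (j : ℕ) (h : c j ≠ c (j + 1)) : binDigit z (j + 1) ≠ binDigit z (j + 2) := by
    rw [binDigit_succ_eq_digits, binDigit_succ_eq_digits]
    exact_mod_cast Fin.val_injective.ne h
  refine ⟨(⌊z⌋ + (c 0 : ℕ) : ℤ) + Real.ofDigits (ascents c),
    intCast_add_mem_BE10 _ (ofDigits_mem_BE10 (exists_ge_ascents_eq_zero c) hz
      fun j h => hchange j (ne_of_ascents_eq_one h)),
    Real.ofDigits (descents c),
    ofDigits_mem_BE10 (exists_ge_descents_eq_zero c) hz fun j h => hchange j (ne_of_descents_eq_one h),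
    ?_⟩
  have := ofDigits_ascents_sub_ofDigits_descents c
  push_cast
  linarith [Int.floor_add_fract z]

theorem stmt14 : BE10 - BE10 = GSet := by
  refine Set.Subset.antisymm ?_ fun z => mem_BE10_sub_BE10
  rintro _ ⟨x, hx, y, hy, rfl⟩
  exact sub_mem_GSet hx hy
end
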